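/- arXiv:0803.1495 — 4 statements merged into one kernel-verified Lean document; each statement's English description precedes it below -/
import Mathlib

section
/- There is no CSS stabilizer code on six qubits that encodes one logical qubit and corrects an arbitrary single-qubit error. Precisely: there do not exist subspaces C_X, C_Z ⊆ (ZMod 2)^6 such that (i) a·b = 0 for all a ∈ C_X, b ∈ C_Z, (ii) dim C_X + dim C_Z = 5, and (iii) every vector of Hamming weight ≤ 2 in C_Z^⊥ lies in C_X and every vector of Hamming weight ≤ 2 in C_X^⊥ lies in C_Z. -/
/-!
Suppose `dim C_X ≤ 2` (otherwise swap the roles of `X` and `Z`) and write `C_X = span {u, v}`.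
Since `dim C_X + dim C_Z < n`, some `t ∈ C_Zᗮ` lies outside `C_X`. For coordinates `i, j` whose
columns `(u i, v i)`, `(u j, v j)` agree, `e i + e j ∈ C_Xᗮ` has weight `≤ 2`, so it lies in `C_Z`
and `t i = t j`; similarly `t i = 0` on zero columns. Hence `t` is a function of the columns
vanishing at `(0, 0)`, i.e. `t = a u + b v + c (u * v)`, and `t ∉ C_X` forces `c = 1`. Now `u * v`,
`u + u * v` and `v + u * v` all lie in `C_Zᗮ \ C_X`, so each has weight at least `3`; their
supports are disjoint, so `n ≥ 9`.
-/

/-- Hamming weight of a binary vector. -/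
def hammingWt {n : ℕ} (v : Fin n → ZMod 2) : ℕ :=
  (Finset.univ.filter fun i => v i ≠ 0).card

/-- Standard bilinear form `a·b = ∑ i, a i * b i` on `(ZMod 2)^n`. -/
def bform {n : ℕ} (a b : Fin n → ZMod 2) : ZMod 2 :=
  ∑ i, a i * b i

open Module Submodule

theorem Submodule.exists_eq_span_pair_of_finrank_le_two {K V : Type*} [Field K] [AddCommGroup V]
    [Module K V] {W : Submodule K V} [FiniteDimensional K W] (hW : finrank K W ≤ 2) :
    ∃ u v, W = span K {u, v} := by
  let b := finBasis K W
  let f : ℕ → V := fun i => if h : i < finrank K W then b ⟨i, h⟩ else 0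
  have hf : ∀ i, f i ∈ W := fun i => by
    by_cases h : i < finrank K W <;> simp [f, h]
  refine ⟨f 0, f 1, le_antisymm (fun w hw => ?_) (span_le.2 (by simp [Set.insert_subset_iff, hf]))⟩
  have hb : ∀ i, (b i : V) ∈ ({f 0, f 1} : Set V) := fun i => by
    have hi : (b i : V) = f i := by simp [f, i.isLt]
    rcases i with ⟨_ | _ | k, hk⟩
    · simp [hi]
    · simp [hi]
    · omega
  have hw' : w = ∑ i, b.repr ⟨w, hw⟩ i • (b i : V) := by
    have := congrArg Subtype.val (b.sum_repr ⟨w, hw⟩)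
    simp only [coe_sum, coe_smul] at this
    exact this.symm
  rw [hw']
  exact sum_mem fun i _ => smul_mem _ _ (subset_span (hb i))

theorem ZMod.eq_zero_or_eq_one (x : ZMod 2) : x = 0 ∨ x = 1 := by
  revert x; decide

theorem exists_eq_smul_add_smul_add_smul_mul {ι : Type*} {u v t : ι → ZMod 2}
    (hcol : ∀ i j, u i = u j → v i = v j → t i = t j)
    (hzero : ∀ i, u i = 0 → v i = 0 → t i = 0) :
    ∃ a b c : ZMod 2, t = a • u + b • v + c • (u * v) := by
  let col : ι → ZMod 2 × ZMod 2 := fun i => (u i, v i)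
  have hft : t.FactorsThrough col := fun i j h =>
    hcol i j (congrArg Prod.fst h) (congrArg Prod.snd h)
  set e := Function.extend col t 0
  have he : ∀ i, t i = e (u i, v i) := fun i => (hft.extend_apply 0 i).symm
  have he0 : e (0, 0) = 0 := by
    by_cases h : ∃ i, col i = (0, 0)
    · obtain ⟨i, hi⟩ := h
      rw [← hi, ← he]
      exact hzero i (congrArg Prod.fst hi) (congrArg Prod.snd hi)
    · exact Function.extend_apply' _ _ _ h
  have interpolate : ∀ x y : ZMod 2,
      e (x, y) = e (1, 0) * x + e (0, 1) * y + (e (1, 1) - e (1, 0) - e (0, 1)) * (x * y) := by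
    intro x y
    rcases ZMod.eq_zero_or_eq_one x with rfl | rfl <;>
      rcases ZMod.eq_zero_or_eq_one y with rfl | rfl <;>
      simp [he0]
  exact ⟨_, _, _, funext fun i => (he i).trans (interpolate (u i) (v i))⟩

section Weight

variable {n : ℕ}

theorem hammingWt_eq_sum (v : Fin n → ZMod 2) :
    hammingWt v = ∑ i, if v i ≠ 0 then 1 else 0 :=
  Finset.card_filter _ _

theorem hammingWt_single_le (i : Fin n) : hammingWt (Pi.single i 1 : Fin n → ZMod 2) ≤ 1 := by
  refine (Finset.card_le_card fun k hk => ?_).trans (Finset.card_singleton i).le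
  by_contra h
  simp_all [Pi.single_apply]

theorem hammingWt_single_add_single_le (i j : Fin n) :
    hammingWt (Pi.single i 1 + Pi.single j 1 : Fin n → ZMod 2) ≤ 2 := by
  refine (Finset.card_le_card fun k hk => ?_).trans (Finset.card_le_two (a := i) (b := j))
  by_contra h
  simp_all [Pi.single_apply]

theorem hammingWt_mul_add_hammingWt_add_mul_add_hammingWt_add_mul_le (u v : Fin n → ZMod 2) :
    hammingWt (u * v) + hammingWt (u + u * v) + hammingWt (v + u * v) ≤ n := by
  have key : ∀ x y : ZMod 2, ((if x * y ≠ 0 then 1 else 0) + (if x + x * y ≠ 0 then 1 else 0) +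
      (if y + x * y ≠ 0 then 1 else 0) : ℕ) ≤ 1 := by decide
  simp only [hammingWt_eq_sum, ← Finset.sum_add_distrib]
  calc _ ≤ ∑ _ : Fin n, 1 := Finset.sum_le_sum fun i _ => key (u i) (v i)
    _ = n := by simp

end Weight

section Perp

variable {n : ℕ}

theorem bform_eq_dotProduct (a b : Fin n → ZMod 2) : bform a b = a ⬝ᵥ b := rfl

theorem bform_comm (a b : Fin n → ZMod 2) : bform a b = bform b a := dotProduct_comm a b

def perp (C : Submodule (ZMod 2) (Fin n → ZMod 2)) : Submodule (ZMod 2) (Fin n → ZMod 2) :=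
  LinearMap.BilinForm.orthogonal (dotProductBilin (ZMod 2) (ZMod 2)).flip C

theorem mem_perp {C : Submodule (ZMod 2) (Fin n → ZMod 2)} {v : Fin n → ZMod 2} :
    v ∈ perp C ↔ ∀ c ∈ C, bform v c = 0 :=
  Iff.rfl

theorem mem_perp_span_pair {u v w : Fin n → ZMod 2} :
    w ∈ perp (span (ZMod 2) {u, v}) ↔ bform w u = 0 ∧ bform w v = 0 := by
  refine ⟨fun h => ⟨mem_perp.1 h u (subset_span (by simp)), mem_perp.1 h v (subset_span (by simp))⟩,
    fun ⟨hu, hv⟩ => mem_perp.2 fun c hc => ?_⟩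
  obtain ⟨a, b, rfl⟩ := mem_span_pair.1 hc
  simp_all [bform_eq_dotProduct, dotProduct_add]

theorem le_finrank_add_finrank_perp (C : Submodule (ZMod 2) (Fin n → ZMod 2)) :
    n ≤ finrank (ZMod 2) C + finrank (ZMod 2) (perp C) := by
  have := LinearMap.BilinForm.finrank_add_finrank_orthogonal'
    (B := (dotProductBilin (ZMod 2) (ZMod 2)).flip) C
  rw [finrank_fin_fun] at this
  rw [perp]
  omega

theorem exists_mem_perp_notMem {C D : Submodule (ZMod 2) (Fin n → ZMod 2)}
    (h : finrank (ZMod 2) C + finrank (ZMod 2) D < n) : ∃ t ∈ perp D, t ∉ C := by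
  refine SetLike.not_le_iff_exists.1 fun hle => ?_
  have := finrank_mono hle
  have := le_finrank_add_finrank_perp D
  omega

end Perp

theorem exists_eq_smul_add_smul_add_smul_mul_of_mem_perp {n : ℕ} {u v t : Fin n → ZMod 2}
    {CZ : Submodule (ZMod 2) (Fin n → ZMod 2)}
    (hX : ∀ w, hammingWt w ≤ 2 → w ∈ perp (span (ZMod 2) {u, v}) → w ∈ CZ) (ht : t ∈ perp CZ) :
    ∃ a b c : ZMod 2, t = a • u + b • v + c • (u * v) := by
  refine exists_eq_smul_add_smul_add_smul_mul (fun i j hu hv => ?_) (fun i hu hv => ?_)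
  · have hij : Pi.single i 1 + Pi.single j 1 ∈ CZ :=
      hX _ (hammingWt_single_add_single_le i j) (mem_perp_span_pair.2
        ⟨by simp [bform_eq_dotProduct, hu, CharTwo.add_self_eq_zero],
          by simp [bform_eq_dotProduct, hv, CharTwo.add_self_eq_zero]⟩)
    simpa [bform_eq_dotProduct, dotProduct_add, CharTwo.add_eq_zero] using mem_perp.1 ht _ hij
  · have hi : Pi.single i 1 ∈ CZ :=
      hX _ ((hammingWt_single_le i).trans one_le_two)
        (mem_perp_span_pair.2 ⟨by simp [bform_eq_dotProduct, hu], by simp [bform_eq_dotProduct, hv]⟩)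
    simpa [bform_eq_dotProduct] using mem_perp.1 ht _ hi

theorem nine_le_of_finrank_le_two {n : ℕ} {CX CZ : Submodule (ZMod 2) (Fin n → ZMod 2)}
    (horth : CX ≤ perp CZ) (hk : finrank (ZMod 2) CX + finrank (ZMod 2) CZ < n)
    (hZ : ∀ w, hammingWt w ≤ 2 → w ∈ perp CZ → w ∈ CX)
    (hX : ∀ w, hammingWt w ≤ 2 → w ∈ perp CX → w ∈ CZ)
    (hCX : finrank (ZMod 2) CX ≤ 2) : 9 ≤ n := by
  obtain ⟨u, v, rfl⟩ := exists_eq_span_pair_of_finrank_le_two hCX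
  obtain ⟨t, ht, htX⟩ := exists_mem_perp_notMem hk
  obtain ⟨a, b, c, rfl⟩ := exists_eq_smul_add_smul_add_smul_mul_of_mem_perp hX ht
  have hlin : a • u + b • v ∈ span (ZMod 2) {u, v} :=
    add_mem (smul_mem _ _ (subset_span (by simp))) (smul_mem _ _ (subset_span (by simp)))
  have hcs : c • (u * v) ∈ perp CZ := (add_mem_cancel_left (horth hlin)).1 ht
  have hcsX : c • (u * v) ∉ span (ZMod 2) {u, v} := fun h => htX (add_mem hlin h)
  obtain rfl : c = 1 := by
    rcases ZMod.eq_zero_or_eq_one c with rfl | rfl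
    · simp at hcsX
    · rfl
  rw [one_smul] at hcs hcsX
  have hwt : ∀ w ∈ perp CZ, w ∉ span (ZMod 2) {u, v} → 3 ≤ hammingWt w := fun w hw hwX => by
    by_contra hlt
    exact hwX (hZ w (by omega) hw)
  have h1 := hwt _ hcs hcsX
  have h2 := hwt (u + u * v) (add_mem (horth (subset_span (by simp))) hcs)
    fun h => hcsX ((add_mem_cancel_left (subset_span (by simp))).1 h)
  have h3 := hwt (v + u * v) (add_mem (horth (subset_span (by simp))) hcs)
    fun h => hcsX ((add_mem_cancel_left (subset_span (by simp))).1 h)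
  have := hammingWt_mul_add_hammingWt_add_mul_add_hammingWt_add_mul_le u v
  omega

/-- There is no CSS stabilizer code on six qubits encoding one logical qubit
that corrects an arbitrary single-qubit error. -/
theorem no_six_qubit_CSS_code :
    ¬ ∃ (CX CZ : Submodule (ZMod 2) (Fin 6 → ZMod 2)),
      (∀ a ∈ CX, ∀ b ∈ CZ, bform a b = 0) ∧
      Module.finrank (ZMod 2) CX + Module.finrank (ZMod 2) CZ = 5 ∧
      (∀ v : Fin 6 → ZMod 2, hammingWt v ≤ 2 →
        (∀ c ∈ CZ, bform v c = 0) → v ∈ CX) ∧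
      (∀ v : Fin 6 → ZMod 2, hammingWt v ≤ 2 →
        (∀ c ∈ CX, bform v c = 0) → v ∈ CZ) := by
  rintro ⟨CX, CZ, horth, hrk, hZ, hX⟩
  have hXZ : CX ≤ perp CZ := fun a ha => mem_perp.2 (horth a ha)
  have hZX : CZ ≤ perp CX := fun b hb => mem_perp.2 fun a ha => bform_comm a b ▸ horth a ha b hb
  rcases le_or_gt (finrank (ZMod 2) CX) 2 with h | h
  · have := nine_le_of_finrank_le_two hXZ (by omega) hZ hX h
    omega
  · have := nine_le_of_finrank_le_two hZX (by omega) hX hZ (by omega)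
    omega
end

section
/- The seven-qubit Steane code is the smallest single-error-correcting CSS code: for every n ≤ 6 there do not exist subspaces C_X, C_Z ⊆ (ZMod 2)^n such that (i) a·b = 0 for all a ∈ C_X, b ∈ C_Z, (ii) dim C_X + dim C_Z ≤ n − 1 (the code encodes at least one logical qubit), and (iii) every vector of Hamming weight ≤ 2 in C_Z^⊥ lies in C_X and every vector of Hamming weight ≤ 2 in C_X^⊥ lies in C_Z. -/
/-!
Let `s i` be the functional `c ↦ c i` on `C_Z`. Condition (iii) puts `e_i` into `C_X` when
`s i = 0` and `e_i - e_j` when `s i = s j`; these vectors span the space of vectors whose sums over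
the nonzero fibers of `s` vanish, whence `n ≤ dim C_X + (2 ^ dim C_Z - 1)`, and symmetrically.
With `dim C_X + dim C_Z < n ≤ 6` this leaves (up to symmetry) `dim C_Z = 2` and
`dim C_X + 3 ≤ n`, where the bound is tight: every nonzero functional on `C_Z` is some `s i`,
and `C_X` is exactly the space of vectors with vanishing fiber sums. The indicator of a fiber of
size at most two is then orthogonal to `C_X`, hence lies in `C_Z`, and evaluation at it would be
a linear functional on the dual of `C_Z` vanishing at all nonzero points but one, which is
impossible in dimension `2`. So the three nonzero fibers have at least three elements each,
and `n ≥ 9`.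
-/

open Finset Module

section FiberSums

variable {ι α : Type*} [Fintype ι] [DecidableEq α] [Zero α] (s : ι → α)

def fiberSums (R : Type*) [Semiring R] : (ι → R) →ₗ[R] ((univ.image s).erase 0 → R) :=
  LinearMap.pi fun a => ∑ i with s i = a, LinearMap.proj i

@[simp]
theorem fiberSums_apply {R : Type*} [Semiring R] (v : ι → R) (a : (univ.image s).erase 0) :
    fiberSums s R v a = ∑ i with s i = a, v i := by
  simp [fiberSums]

theorem ker_fiberSums_le [DecidableEq ι] {R : Type*} [Ring R] {D : Submodule R (ι → R)}
    (h0 : ∀ i, s i = 0 → Pi.single i 1 ∈ D)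
    (hpair : ∀ i j, s i = s j → Pi.single i 1 - Pi.single j 1 ∈ D) :
    LinearMap.ker (fiberSums s R) ≤ D := by
  intro v hv
  rw [← univ_sum_single v,
    ← sum_fiberwise_of_maps_to (fun i _ => mem_image_of_mem s (mem_univ i))]
  refine D.sum_mem fun a ha => ?_
  rcases (univ.filter (s · = a)).eq_empty_or_nonempty with hempty | ⟨j, hj⟩
  · simp [hempty]
  have hsj : s j = a := (mem_filter.mp hj).2
  have hsplit : ∑ i with s i = a, Pi.single i (v i) =
      ∑ i with s i = a, v i • (Pi.single i 1 - Pi.single j 1) +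
        (∑ i with s i = a, v i) • Pi.single j (1 : R) := by
    simp only [sum_smul, ← sum_add_distrib, smul_sub, sub_add_cancel, ← Pi.single_smul',
      smul_eq_mul, mul_one]
  rw [hsplit]
  refine D.add_mem (D.sum_mem fun i hi => D.smul_mem _ (hpair i j ?_)) ?_
  · rw [(mem_filter.mp hi).2, hsj]
  by_cases ha0 : a = 0
  · exact D.smul_mem _ (h0 j (hsj.trans ha0))
  · have := congrFun (LinearMap.mem_ker.mp hv) ⟨a, mem_erase.mpr ⟨ha0, ha⟩⟩
    rw [fiberSums_apply, Pi.zero_apply] at this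
    simp [this]

variable {K : Type*} [Field K]

theorem card_le_finrank_ker_fiberSums_add_card :
    Fintype.card ι ≤ finrank K (LinearMap.ker (fiberSums s K)) + #((univ.image s).erase 0) := by
  have hrange := Submodule.finrank_le (LinearMap.range (fiberSums s K))
  have hrank := (fiberSums s K).finrank_range_add_finrank_ker
  rw [finrank_fintype_fun_eq_card, Fintype.card_coe] at hrange
  rw [finrank_fintype_fun_eq_card] at hrank
  omega

variable [DecidableEq ι] {D : Submodule K (ι → K)}

theorem card_le_finrank_add_card (h0 : ∀ i, s i = 0 → Pi.single i 1 ∈ D)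
    (hpair : ∀ i j, s i = s j → Pi.single i 1 - Pi.single j 1 ∈ D) :
    Fintype.card ι ≤ finrank K D + #((univ.image s).erase 0) :=
  (card_le_finrank_ker_fiberSums_add_card s).trans
    (Nat.add_le_add_right (Submodule.finrank_mono (ker_fiberSums_le s h0 hpair)) _)

theorem ker_fiberSums_eq_of_finrank_add_card_le (h0 : ∀ i, s i = 0 → Pi.single i 1 ∈ D)
    (hpair : ∀ i j, s i = s j → Pi.single i 1 - Pi.single j 1 ∈ D)
    (h : finrank K D + #((univ.image s).erase 0) ≤ Fintype.card ι) :
    LinearMap.ker (fiberSums s K) = D :=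
  Submodule.eq_of_le_of_finrank_le (ker_fiberSums_le s h0 hpair)
    (by have := card_le_finrank_ker_fiberSums_add_card (K := K) s; omega)

end FiberSums

section Syndromes

variable {n : ℕ}

theorem hammingWt_le_two_of_support_subset {v : Fin n → ZMod 2} {i j : Fin n}
    (h : ∀ k, v k ≠ 0 → k = i ∨ k = j) : hammingWt v ≤ 2 :=
  (card_le_card fun k hk => by simpa using h k (mem_filter.mp hk).2).trans card_le_two

theorem bform_single_left (i : Fin n) (c : Fin n → ZMod 2) : bform (Pi.single i 1) c = c i := by
  simp [bform, Pi.single_apply, ite_mul]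

theorem bform_indicator_left (p : Fin n → Prop) [DecidablePred p] (c : Fin n → ZMod 2) :
    bform (fun i => if p i then 1 else 0) c = ∑ i with p i, c i := by
  simp [bform, ite_mul, sum_filter]

/-- The `i`-th column of a parity-check matrix of `C`, taken basis-free as a functional on `C`. -/
def syndrome (C : Submodule (ZMod 2) (Fin n → ZMod 2)) (i : Fin n) : Module.Dual (ZMod 2) C :=
  (LinearMap.proj i).comp C.subtype

@[simp]
theorem syndrome_apply (C : Submodule (ZMod 2) (Fin n → ZMod 2)) (i : Fin n) (c : C) :
    syndrome C i c = (c : Fin n → ZMod 2) i :=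
  rfl

def ContainsLowWeightOrth (CX CZ : Submodule (ZMod 2) (Fin n → ZMod 2)) : Prop :=
  ∀ v : Fin n → ZMod 2, hammingWt v ≤ 2 → (∀ c ∈ CZ, bform v c = 0) → v ∈ CX

variable {CX CZ : Submodule (ZMod 2) (Fin n → ZMod 2)}

theorem single_mem_of_syndrome_eq_zero (h : ContainsLowWeightOrth CX CZ) {i : Fin n}
    (hi : syndrome CZ i = 0) : Pi.single i 1 ∈ CX := by
  refine h _ (hammingWt_le_two_of_support_subset (i := i) (j := i) fun k hk => ?_) fun c hc => ?_
  · by_contra hki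
    simp_all
  · simpa [bform_single_left] using LinearMap.congr_fun hi ⟨c, hc⟩

theorem single_sub_single_mem_of_syndrome_eq (h : ContainsLowWeightOrth CX CZ) {i j : Fin n}
    (hij : syndrome CZ i = syndrome CZ j) : Pi.single i 1 - Pi.single j 1 ∈ CX := by
  refine h _ (hammingWt_le_two_of_support_subset (i := i) (j := j) fun k hk => ?_) fun c hc => ?_
  · by_contra! hk'
    simp_all
  · have := LinearMap.congr_fun hij ⟨c, hc⟩
    simp only [syndrome_apply] at this
    simp [bform, sub_mul, sum_sub_distrib, Pi.single_apply, ite_mul, this]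

open scoped Classical in
theorem le_finrank_add_card_syndromes (h : ContainsLowWeightOrth CX CZ) :
    n ≤ finrank (ZMod 2) CX + #((univ.image (syndrome CZ)).erase 0) := by
  simpa using card_le_finrank_add_card (syndrome CZ)
    (fun _ => single_mem_of_syndrome_eq_zero h)
    (fun _ _ => single_sub_single_mem_of_syndrome_eq h)

noncomputable instance (C : Submodule (ZMod 2) (Fin n → ZMod 2)) :
    Fintype (Module.Dual (ZMod 2) C) :=
  have := Module.finite_of_finite (ZMod 2) (M := Module.Dual (ZMod 2) C)
  Fintype.ofFinite _

theorem card_dual_eq_two_pow (C : Submodule (ZMod 2) (Fin n → ZMod 2)) :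
    Fintype.card (Module.Dual (ZMod 2) C) = 2 ^ finrank (ZMod 2) C := by
  rw [Module.card_eq_pow_finrank (K := ZMod 2), ZMod.card, Subspace.dual_finrank_eq]

theorem le_finrank_add_two_pow_sub_one (h : ContainsLowWeightOrth CX CZ) :
    n ≤ finrank (ZMod 2) CX + (2 ^ finrank (ZMod 2) CZ - 1) := by
  classical
  have hS : #((univ.image (syndrome CZ)).erase 0) ≤ #(univ.erase (0 : Module.Dual (ZMod 2) CZ)) :=
    card_le_card (erase_subset_erase _ (subset_univ _))
  rw [card_erase_of_mem (mem_univ _), card_univ, card_dual_eq_two_pow] at hS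
  have := le_finrank_add_card_syndromes h
  omega

open scoped Classical in
theorem three_le_card_fiber_syndrome (h : ContainsLowWeightOrth CZ CX)
    (hfiber : ∀ c ∈ CX, ∀ σ ≠ 0, ∑ i with syndrome CZ i = σ, c i = 0)
    (hsurj : ∀ ρ ≠ 0, ∃ i, syndrome CZ i = ρ) {σ τ : Module.Dual (ZMod 2) CZ}
    (hσ : σ ≠ 0) (hτ : τ ≠ 0) (hτσ : τ ≠ σ) :
    3 ≤ #{i | syndrome CZ i = σ} := by
  by_contra! hlt
  set u : Fin n → ZMod 2 := fun i => if syndrome CZ i = σ then 1 else 0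
  have hwt : hammingWt u ≤ 2 := by
    have : hammingWt u = #{i | syndrome CZ i = σ} := by simp [hammingWt, u]
    omega
  have hu : u ∈ CZ := h u hwt fun c hc => by
    rw [bform_indicator_left]; exact hfiber c hc σ hσ
  -- Evaluation at `u` is linear on the dual, yet among nonzero functionals it singles out `σ`.
  have hev : ∀ ρ ≠ 0, ρ ⟨u, hu⟩ = if ρ = σ then 1 else 0 := fun ρ hρ => by
    obtain ⟨i, rfl⟩ := hsurj ρ hρ
    rfl
  have hστ : σ + τ ≠ 0 := fun h0 =>
    hτσ (by rw [← ZModModule.neg_eq_self σ, eq_neg_iff_add_eq_zero, add_comm, h0])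
  have := hev (σ + τ) hστ
  rw [LinearMap.add_apply, hev σ hσ, hev τ hτ, if_pos rfl, if_neg hτσ,
    if_neg (by simpa using hτ)] at this
  exact one_ne_zero this

theorem three_mul_le_of_finrank_add_two_pow_sub_one_le
    (h1 : ContainsLowWeightOrth CX CZ) (h2 : ContainsLowWeightOrth CZ CX)
    (hZ : 2 ≤ finrank (ZMod 2) CZ)
    (htight : finrank (ZMod 2) CX + (2 ^ finrank (ZMod 2) CZ - 1) ≤ n) :
    3 * (2 ^ finrank (ZMod 2) CZ - 1) ≤ n := by
  classical
  have hN : #(univ.erase (0 : Module.Dual (ZMod 2) CZ)) = 2 ^ finrank (ZMod 2) CZ - 1 := by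
    rw [card_erase_of_mem (mem_univ _), card_univ, card_dual_eq_two_pow]
  have hle := le_finrank_add_card_syndromes h1
  have hSN : (univ.image (syndrome CZ)).erase 0 = univ.erase 0 :=
    eq_of_subset_of_card_le (erase_subset_erase _ (subset_univ _)) (by omega)
  have hsurj (ρ : Module.Dual (ZMod 2) CZ) (hρ : ρ ≠ 0) : ∃ i, syndrome CZ i = ρ := by
    have : ρ ∈ (univ.image (syndrome CZ)).erase 0 := hSN ▸ mem_erase.mpr ⟨hρ, mem_univ ρ⟩
    obtain ⟨i, -, hi⟩ := mem_image.mp (mem_of_mem_erase this)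
    exact ⟨i, hi⟩
  have hker := ker_fiberSums_eq_of_finrank_add_card_le (syndrome CZ)
    (fun _ => single_mem_of_syndrome_eq_zero h1)
    (fun _ _ => single_sub_single_mem_of_syndrome_eq h1) (by simp only [hSN, hN]; simpa)
  have hfiber (c) (hc : c ∈ CX) (σ : Module.Dual (ZMod 2) CZ) (hσ : σ ≠ 0) :
      ∑ i with syndrome CZ i = σ, c i = 0 := by
    rw [← hker, LinearMap.mem_ker] at hc
    simpa using congrFun hc ⟨σ, hSN ▸ mem_erase.mpr ⟨hσ, mem_univ σ⟩⟩
  have h4 : 4 ≤ 2 ^ finrank (ZMod 2) CZ := Nat.pow_le_pow_right two_pos hZ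
  have hthree (σ) (hσ : σ ∈ univ.erase 0) : 3 ≤ #{i | syndrome CZ i = σ} := by
    obtain ⟨τ, hτ, hτσ⟩ := exists_mem_ne (s := univ.erase 0) (by omega) σ
    exact three_le_card_fiber_syndrome h2 hfiber hsurj (ne_of_mem_erase hσ) (ne_of_mem_erase hτ)
      hτσ
  calc 3 * (2 ^ finrank (ZMod 2) CZ - 1) = #(univ.erase 0) * 3 := by rw [hN, mul_comm]
    _ ≤ ∑ σ ∈ univ.erase 0, #{i | syndrome CZ i = σ} := card_nsmul_le_sum _ _ _ hthree
    _ ≤ ∑ σ, #{i | syndrome CZ i = σ} := sum_le_sum_of_subset (subset_univ _)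
    _ = n := by
      rw [← card_eq_sum_card_fiberwise (fun i _ => mem_univ _), card_univ, Fintype.card_fin]

end Syndromes

/-- The Steane code is the smallest single-error-correcting CSS code: for every
`n ≤ 6` there is no CSS code on `n` qubits encoding at least one logical qubit
(i.e. `dim C_X + dim C_Z ≤ n - 1`) that corrects an arbitrary single-qubit error. -/
theorem steane_smallest_CSS (n : ℕ) (hn : n ≤ 6) :
    ¬ ∃ (CX CZ : Submodule (ZMod 2) (Fin n → ZMod 2)),
      (∀ a ∈ CX, ∀ b ∈ CZ, bform a b = 0) ∧
      Module.finrank (ZMod 2) CX + Module.finrank (ZMod 2) CZ + 1 ≤ n ∧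
      (∀ v : Fin n → ZMod 2, hammingWt v ≤ 2 →
        (∀ c ∈ CZ, bform v c = 0) → v ∈ CX) ∧
      (∀ v : Fin n → ZMod 2, hammingWt v ≤ 2 →
        (∀ c ∈ CX, bform v c = 0) → v ∈ CZ) := by
  rintro ⟨CX, CZ, -, hdim, h1, h2⟩
  have hX := le_finrank_add_two_pow_sub_one h1
  have hZ := le_finrank_add_two_pow_sub_one h2
  -- `n ≤ a + (2 ^ b - 1)` with `a + b < n` rules out `b ≤ 1`, and symmetrically `a ≤ 1`.
  have hcases : (finrank (ZMod 2) CZ = 2 ∧ finrank (ZMod 2) CX + 3 ≤ n) ∨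
      (finrank (ZMod 2) CX = 2 ∧ finrank (ZMod 2) CZ + 3 ≤ n) := by
    generalize finrank (ZMod 2) CX = a at *
    generalize finrank (ZMod 2) CZ = b at *
    have : a ≤ 5 := by omega
    have : b ≤ 5 := by omega
    interval_cases a <;> interval_cases b <;> omega
  rcases hcases with ⟨hb, ha⟩ | ⟨ha, hb⟩
  · have := three_mul_le_of_finrank_add_two_pow_sub_one_le h1 h2 (by omega) (by rw [hb]; omega)
    rw [hb] at this
    omega
  · have := three_mul_le_of_finrank_add_two_pow_sub_one_le h2 h1 (by omega) (by rw [ha]; omega)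
    rw [ha] at this
    omega
end

section
/- Every [[n,1,3]] stabilizer code is an [[n−1,1,3;1]] entanglement-assisted code with any qubit serving as Bob's half of the ebit. Precisely: let n ≥ 3 and let S ⊆ (ZMod 2)^n × (ZMod 2)^n be an isotropic subspace of dimension n−1 such that S contains no element of qubit weight 1 (the code is nontrivial on every qubit) and every element of S^⊥ of qubit weight at most 2 lies in S (the code corrects an arbitrary single-qubit error). Then for every qubit index j there exists a basis b₁, …, b_{n−1} of S such that the qubit-j component (x_j, z_j) of b₁ equals (1,0) (a single X), the qubit-j component of b₂ equals (0,1) (a single Z), and the qubit-j component of every other basis element equals (0,0) (identity). -/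
/-- An `n`-qubit Pauli operator modulo phase: the pair `(x|z)` of X-components
and Z-components. -/
abbrev PauliVec (n : ℕ) := (Fin n → ZMod 2) × (Fin n → ZMod 2)

/-- The symplectic product of `(x|z)` and `(x'|z')`, namely `x·z' + z·x'`.
Two Pauli operators commute iff their symplectic product is `0`. -/
def symp {n : ℕ} (v w : PauliVec n) : ZMod 2 :=
  (∑ i, v.1 i * w.2 i) + ∑ i, v.2 i * w.1 i

/-- The qubit weight of `(x|z)`: the number of qubits on which the Pauli
operator acts nontrivially. -/
def qwt {n : ℕ} (v : PauliVec n) : ℕ :=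
  (Finset.univ.filter fun i => (v.1 i, v.2 i) ≠ (0, 0)).card

/-!
A single-qubit Pauli on qubit `j` that commutes with all of `S` lies in `S^⊥`, so by the
distance condition it lies in `S`, which has no elements of weight one. Hence no nonzero
linear form on `𝔽₂²` vanishes on the restriction of `S` to qubit `j`, i.e. this restriction
map `S → 𝔽₂²` is surjective. Lifting `X` and `Z` to `S` and adding a basis of the kernel
gives the required basis.
-/

open Module LinearMap

section

variable {K V W ι κ : Type*} [Field K] [AddCommGroup V] [Module K V] [AddCommGroup W]
  [Module K W]

theorem LinearMap.exists_basis_sumElim_of_surjective (f : V →ₗ[K] W)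
    (hf : Function.Surjective f) (c : Basis ι K W) (d : Basis κ K (ker f)) :
    ∃ b : Basis (ι ⊕ κ) K V, ∀ p, f (b p) = Sum.elim c 0 p := by
  obtain ⟨q, hq⟩ := (ker f).exists_isCompl
  let e : V ≃ₗ[K] W × ker f :=
    equivProdOfSurjectiveOfIsCompl f ((ker f).projectionOnto q hq) (range_eq_top.2 hf)
      (Submodule.range_projectionOnto hq) (by rwa [Submodule.ker_projectionOnto])
  refine ⟨(c.prod d).map e.symm, fun p => ?_⟩
  have hfe : ∀ v, f v = (e v).1 := fun v => rfl
  rw [hfe, Basis.map_apply, LinearEquiv.apply_symm_apply]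
  rcases p with i | k
  · exact Basis.prod_apply_inl_fst c d i
  · exact Basis.prod_apply_inr_fst c d k

theorem LinearMap.exists_finBasis_of_surjective_prod [FiniteDimensional K V]
    (f : V →ₗ[K] K × K) (hf : Function.Surjective f) {m : ℕ} (hm : finrank K V = m) :
    ∃ b : Basis (Fin m) K V, ∀ i : Fin m,
      f (b i) = if (i : ℕ) = 0 then ((1 : K), (0 : K))
        else if (i : ℕ) = 1 then (0, 1) else (0, 0) := by
  obtain ⟨b, hb⟩ := f.exists_basis_sumElim_of_surjective hf (Basis.finTwoProd K)
    (finBasis K (ker f))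
  have hcard : 2 + finrank K (ker f) = m := by
    simpa [← hm] using (finrank_eq_card_basis b).symm
  let e := finSumFinEquiv.trans (finCongr hcard)
  refine ⟨b.reindex e, fun i => ?_⟩
  obtain ⟨p, rfl⟩ := e.surjective i
  rw [Basis.reindex_apply, Equiv.symm_apply_apply, hb]
  rcases p with i | k
  · fin_cases i <;> simp [e]
  · simp [e, show 2 + (k : ℕ) ≠ 1 by omega, Prod.zero_eq_mk]

end

namespace PauliVec

variable {n : ℕ}

def single (j : Fin n) (p : ZMod 2 × ZMod 2) : PauliVec n :=
  (Pi.single j p.1, Pi.single j p.2)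

def restrict (j : Fin n) : PauliVec n →ₗ[ZMod 2] ZMod 2 × ZMod 2 :=
  (LinearMap.proj j).prodMap (LinearMap.proj j)

@[simp]
lemma restrict_apply (j : Fin n) (v : PauliVec n) : restrict j v = (v.1 j, v.2 j) := rfl

lemma symp_single (j : Fin n) (p : ZMod 2 × ZMod 2) (v : PauliVec n) :
    symp (single j p) v = p.1 * v.2 j + p.2 * v.1 j := by
  simp [symp, single, Pi.single_apply]

lemma qwt_single (j : Fin n) {p : ZMod 2 × ZMod 2} (hp : p ≠ 0) : qwt (single j p) = 1 := by
  rw [qwt, Finset.card_eq_one]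
  refine ⟨j, Finset.ext fun i => ?_⟩
  by_cases hij : i = j
  · subst hij
    simpa [single, Prod.ext_iff] using hp
  · simp [single, hij]

lemma exists_symp_single_ne_zero {S : Submodule (ZMod 2) (PauliVec n)}
    (hwt1 : ∀ v ∈ S, qwt v ≠ 1)
    (hdist : ∀ v : PauliVec n, (∀ s ∈ S, symp v s = 0) → qwt v ≤ 1 → v ∈ S)
    (j : Fin n) {p : ZMod 2 × ZMod 2} (hp : p ≠ 0) :
    ∃ s ∈ S, symp (single j p) s ≠ 0 := by
  by_contra! hcomm
  exact hwt1 _ (hdist _ hcomm (qwt_single j hp).le) (qwt_single j hp)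

lemma restrict_surjective_of_symp_single_ne_zero (S : Submodule (ZMod 2) (PauliVec n))
    (j : Fin n) (hS : ∀ p ≠ 0, ∃ s ∈ S, symp (single j p) s ≠ 0) :
    Function.Surjective ((restrict j).domRestrict S) := by
  rw [← range_eq_top]
  by_contra hne
  obtain ⟨φ, hφ, hle⟩ := (range _).exists_le_ker_of_lt_top (lt_top_iff_ne_top.2 hne)
  have hφ_apply : ∀ a : ZMod 2 × ZMod 2, φ a = a.1 * φ (1, 0) + a.2 * φ (0, 1) := by
    rintro ⟨x, z⟩
    calc φ (x, z) = φ (x • (1, 0) + z • (0, 1)) := by simp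
      _ = x * φ (1, 0) + z * φ (0, 1) := by rw [map_add, map_smul, map_smul]; rfl
  -- `single j (φ (0, 1), φ (1, 0))` pairs with `v` under `symp` exactly as `φ` does with `v`'s
  -- restriction to qubit `j`.
  obtain ⟨s, hs, hsymp⟩ := hS (φ (0, 1), φ (1, 0)) fun h => hφ <| LinearMap.ext fun a => by
    rw [Prod.mk_eq_zero] at h
    simp [hφ_apply a, h.1, h.2]
  have hφs := hle ⟨⟨s, hs⟩, rfl⟩
  rw [mem_ker, hφ_apply, domRestrict_apply, restrict_apply] at hφs
  rw [symp_single] at hsymp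
  exact hsymp (by linear_combination hφs)

end PauliVec

theorem stabilizer_code_gives_EA_code_general (n : ℕ)
    (S : Submodule (ZMod 2) (PauliVec n))
    (hdim : Module.finrank (ZMod 2) S = n - 1)
    (hwt1 : ∀ v ∈ S, qwt v ≠ 1)
    (hdist : ∀ v : PauliVec n, (∀ s ∈ S, symp v s = 0) → qwt v ≤ 2 → v ∈ S) :
    ∀ j : Fin n, ∃ b : Module.Basis (Fin (n - 1)) (ZMod 2) S,
      ∀ i : Fin (n - 1),
        ((b i : PauliVec n).1 j, (b i : PauliVec n).2 j) =
          if (i : ℕ) = 0 then ((1 : ZMod 2), (0 : ZMod 2))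
          else if (i : ℕ) = 1 then (0, 1) else (0, 0) := by
  intro j
  have hsurj := PauliVec.restrict_surjective_of_symp_single_ne_zero S j fun _ hp =>
    PauliVec.exists_symp_single_ne_zero hwt1 (fun v hv hw => hdist v hv (by omega)) j hp
  exact ((PauliVec.restrict j).domRestrict S).exists_finBasis_of_surjective_prod hsurj hdim

/-- Every [[n,1,3]] stabilizer code is an [[n-1,1,3;1]] entanglement-assisted
code with any qubit serving as Bob's half of the ebit: if `S` is an isotropic
subspace of dimension `n-1` containing no element of qubit weight 1 and such
that every element of `S^⊥` of qubit weight at most 2 lies in `S`, then for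
every qubit index `j` there is a basis of `S` whose first element restricts to
an `X` on qubit `j`, whose second element restricts to a `Z` on qubit `j`, and
all of whose other elements restrict to the identity on qubit `j`. -/
theorem stabilizer_code_gives_EA_code (n : ℕ) (hn : 3 ≤ n)
    (S : Submodule (ZMod 2) (PauliVec n))
    (hiso : ∀ a ∈ S, ∀ b ∈ S, symp a b = 0)
    (hdim : Module.finrank (ZMod 2) S = n - 1)
    (hwt1 : ∀ v ∈ S, qwt v ≠ 1)
    (hdist : ∀ v : PauliVec n, (∀ s ∈ S, symp v s = 0) → qwt v ≤ 2 → v ∈ S) :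
    ∀ j : Fin n, ∃ b : Module.Basis (Fin (n - 1)) (ZMod 2) S,
      ∀ i : Fin (n - 1),
        ((b i : PauliVec n).1 j, (b i : PauliVec n).2 j) =
          if (i : ℕ) = 0 then ((1 : ZMod 2), (0 : ZMod 2))
          else if (i : ℕ) = 1 then (0, 1) else (0, 0) :=
  stabilizer_code_gives_EA_code_general n S hdim hwt1 hdist
end

section
/- The six-qubit entanglement-assisted CSS code is globally equivalent to the seven-qubit Steane code: there exists a permutation σ of the seven qubit positions such that applying σ simultaneously to the X-part and Z-part coordinates maps the subspace span{g1,…,g6} ⊆ (ZMod 2)^7 × (ZMod 2)^7 (where g1,…,g6 correspond to the Pauli strings IZIZZZI, IZZIIZZ, ZZIIZIZ, IXXIIXX, IIXXXIX, XXIIXIX) onto the Steane stabilizer, namely the span of {(r|0) : r a row of H} ∪ {(0|r) : r a row of H}, where H is the matrix with rows (1,0,0,1,0,1,1), (0,1,0,1,1,0,1), (0,0,1,0,1,1,1). -/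
/-- A 7-qubit Pauli operator modulo phase: the pair `(x|z)` of X-components
and Z-components. -/
abbrev PauliVec7 := (Fin 7 → ZMod 2) × (Fin 7 → ZMod 2)

/-- The Pauli string IZIZZZI (first position is Bob's qubit, the rest Alice's). -/
def g1 : PauliVec7 := (![0, 0, 0, 0, 0, 0, 0], ![0, 1, 0, 1, 1, 1, 0])
/-- The Pauli string IZZIIZZ. -/
def g2 : PauliVec7 := (![0, 0, 0, 0, 0, 0, 0], ![0, 1, 1, 0, 0, 1, 1])
/-- The Pauli string ZZIIZIZ. -/
def g3 : PauliVec7 := (![0, 0, 0, 0, 0, 0, 0], ![1, 1, 0, 0, 1, 0, 1])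
/-- The Pauli string IXXIIXX. -/
def g4 : PauliVec7 := (![0, 1, 1, 0, 0, 1, 1], ![0, 0, 0, 0, 0, 0, 0])
/-- The Pauli string IIXXXIX. -/
def g5 : PauliVec7 := (![0, 0, 1, 1, 1, 0, 1], ![0, 0, 0, 0, 0, 0, 0])
/-- The Pauli string XXIIXIX. -/
def g6 : PauliVec7 := (![1, 1, 0, 0, 1, 0, 1], ![0, 0, 0, 0, 0, 0, 0])

/-- The stabilizer of the six-qubit entanglement-assisted code (on all seven
qubits, including Bob's). -/
def Sea : Submodule (ZMod 2) PauliVec7 :=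
  Submodule.span (ZMod 2) ({g1, g2, g3, g4, g5, g6} : Set PauliVec7)

/-- The rows of the parity-check matrix of the [7,4,3] Hamming code. -/
def r1 : Fin 7 → ZMod 2 := ![1, 0, 0, 1, 0, 1, 1]
def r2 : Fin 7 → ZMod 2 := ![0, 1, 0, 1, 1, 0, 1]
def r3 : Fin 7 → ZMod 2 := ![0, 0, 1, 0, 1, 1, 1]

/-- The stabilizer of the seven-qubit Steane code: spanned by the X-type and
Z-type generators given by the rows of the Hamming parity-check matrix. -/
def SteaneS : Submodule (ZMod 2) PauliVec7 :=
  Submodule.span (ZMod 2)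
    ({(r1, 0), (r2, 0), (r3, 0), (0, r1), (0, r2), (0, r3)} : Set PauliVec7)

def sigma0 : Equiv.Perm (Fin 7) :=
  ⟨![0, 4, 1, 5, 2, 6, 3], ![0, 2, 4, 6, 1, 3, 5], by decide, by decide⟩

def L0 : PauliVec7 →ₗ[ZMod 2] PauliVec7 where
  toFun v := ((fun i => v.1 (sigma0.symm i), fun i => v.2 (sigma0.symm i)) : PauliVec7)
  map_add' _ _ := rfl
  map_smul' _ _ := rfl

/-- The six-qubit entanglement-assisted CSS code is globally equivalent to the
seven-qubit Steane code: some permutation of the seven qubit positions, acting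
simultaneously on the X-part and Z-part coordinates by
`(x|z) ↦ (x ∘ σ⁻¹ | z ∘ σ⁻¹)`, maps the span of `g1, …, g6` onto the Steane
stabilizer. -/
theorem ea_six_qubit_code_equiv_steane :
    ∃ σ : Equiv.Perm (Fin 7),
      (fun v : PauliVec7 =>
          ((fun i => v.1 (σ.symm i), fun i => v.2 (σ.symm i)) : PauliVec7)) ''
        (Sea : Set PauliVec7) = (SteaneS : Set PauliVec7) := by
  refine ⟨sigma0, ?_⟩
  have himg : (fun v : PauliVec7 =>
      ((fun i => v.1 (sigma0.symm i), fun i => v.2 (sigma0.symm i)) : PauliVec7)) ''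
      (Sea : Set PauliVec7) = ((Sea.map L0 : Submodule (ZMod 2) PauliVec7) : Set PauliVec7) := by
    rw [Submodule.map_coe]; rfl
  rw [himg, SetLike.coe_set_eq]
  rw [Sea, Submodule.map_span]
  have himg2 : L0 '' ({g1, g2, g3, g4, g5, g6} : Set PauliVec7)
      = ({L0 g1, L0 g2, L0 g3, L0 g4, L0 g5, L0 g6} : Set PauliVec7) := by
    simp [Set.image_insert_eq]
  rw [himg2, SteaneS]
  have m1 : ((r1, 0) : PauliVec7) ∈ ({(r1, 0), (r2, 0), (r3, 0), (0, r1), (0, r2), (0, r3)} : Set PauliVec7) := by simp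
  have m2 : ((r2, 0) : PauliVec7) ∈ ({(r1, 0), (r2, 0), (r3, 0), (0, r1), (0, r2), (0, r3)} : Set PauliVec7) := by simp
  have m3 : ((r3, 0) : PauliVec7) ∈ ({(r1, 0), (r2, 0), (r3, 0), (0, r1), (0, r2), (0, r3)} : Set PauliVec7) := by simp
  have m4 : ((0, r1) : PauliVec7) ∈ ({(r1, 0), (r2, 0), (r3, 0), (0, r1), (0, r2), (0, r3)} : Set PauliVec7) := by simp
  have m5 : ((0, r2) : PauliVec7) ∈ ({(r1, 0), (r2, 0), (r3, 0), (0, r1), (0, r2), (0, r3)} : Set PauliVec7) := by simp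
  have m6 : ((0, r3) : PauliVec7) ∈ ({(r1, 0), (r2, 0), (r3, 0), (0, r1), (0, r2), (0, r3)} : Set PauliVec7) := by simp
  have n1 : L0 g1 ∈ ({L0 g1, L0 g2, L0 g3, L0 g4, L0 g5, L0 g6} : Set PauliVec7) := by simp
  have n2 : L0 g2 ∈ ({L0 g1, L0 g2, L0 g3, L0 g4, L0 g5, L0 g6} : Set PauliVec7) := by simp
  have n3 : L0 g3 ∈ ({L0 g1, L0 g2, L0 g3, L0 g4, L0 g5, L0 g6} : Set PauliVec7) := by simp
  have n4 : L0 g4 ∈ ({L0 g1, L0 g2, L0 g3, L0 g4, L0 g5, L0 g6} : Set PauliVec7) := by simp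
  have n5 : L0 g5 ∈ ({L0 g1, L0 g2, L0 g3, L0 g4, L0 g5, L0 g6} : Set PauliVec7) := by simp
  have n6 : L0 g6 ∈ ({L0 g1, L0 g2, L0 g3, L0 g4, L0 g5, L0 g6} : Set PauliVec7) := by simp
  apply le_antisymm <;> rw [Submodule.span_le] <;> intro x hx <;>
    simp only [Set.mem_insert_iff, Set.mem_singleton_iff] at hx
  · rcases hx with rfl | rfl | rfl | rfl | rfl | rfl
    · -- L0 g1 = (0, r3)
      have : L0 g1 = ((0, r3) : PauliVec7) := by decide
      rw [this]; exact Submodule.subset_span m6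
    · have : L0 g2 = ((0, r2) : PauliVec7) := by decide
      rw [this]; exact Submodule.subset_span m5
    · have : L0 g3 = ((0, r1) : PauliVec7) + ((0, r3) : PauliVec7) := by decide
      rw [this]; exact add_mem (Submodule.subset_span m4) (Submodule.subset_span m6)
    · have : L0 g4 = ((r2, 0) : PauliVec7) := by decide
      rw [this]; exact Submodule.subset_span m2
    · have : L0 g5 = ((r2, 0) : PauliVec7) + ((r3, 0) : PauliVec7) := by decide
      rw [this]; exact add_mem (Submodule.subset_span m2) (Submodule.subset_span m3)
    · have : L0 g6 = ((r1, 0) : PauliVec7) + ((r3, 0) : PauliVec7) := by decide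
      rw [this]; exact add_mem (Submodule.subset_span m1) (Submodule.subset_span m3)
  · rcases hx with rfl | rfl | rfl | rfl | rfl | rfl
    · have : ((r1, 0) : PauliVec7) = L0 g4 + L0 g5 + L0 g6 := by decide
      rw [this]
      exact add_mem (add_mem (Submodule.subset_span n4) (Submodule.subset_span n5)) (Submodule.subset_span n6)
    · have : ((r2, 0) : PauliVec7) = L0 g4 := by decide
      rw [this]; exact Submodule.subset_span n4
    · have : ((r3, 0) : PauliVec7) = L0 g4 + L0 g5 := by decide
      rw [this]; exact add_mem (Submodule.subset_span n4) (Submodule.subset_span n5)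
    · have : ((0, r1) : PauliVec7) = L0 g1 + L0 g3 := by decide
      rw [this]; exact add_mem (Submodule.subset_span n1) (Submodule.subset_span n3)
    · have : ((0, r2) : PauliVec7) = L0 g2 := by decide
      rw [this]; exact Submodule.subset_span n2
    · have : ((0, r3) : PauliVec7) = L0 g1 := by decide
      rw [this]; exact Submodule.subset_span n1
end
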